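/- arXiv:1301.2915 — 2 statements merged into one kernel-verified Lean document; each statement's English description precedes it below -/
import Mathlib

section
/- For every positive integer k, 2·∑_{j=1}^{k} ∑_{l=1}^{j} 1/(2l−1) = (2k+1)·(∑_{l=1}^{2k} 1/l − ∑_{l=1}^{k} 1/(2l)) − k. -/
open Finset

theorem sum_Icc_sum_Icc_eq_sum_nsmul {M : Type*} [AddCommMonoid M] (a : ℕ → M) (k : ℕ) :
    ∑ j ∈ Icc 1 k, ∑ l ∈ Icc 1 j, a l = ∑ l ∈ Icc 1 k, (k + 1 - l) • a l := by
  rw [sum_comm' (t' := Icc 1 k) (s' := fun l => Icc l k) (by grind)]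
  simp only [sum_const, Nat.card_Icc]

theorem sum_Icc_two_mul_eq_odd_add_even {M : Type*} [AddCommMonoid M] (f : ℕ → M) (k : ℕ) :
    ∑ l ∈ Icc 1 (2 * k), f l = ∑ l ∈ Icc 1 k, f (2 * l - 1) + ∑ l ∈ Icc 1 k, f (2 * l) := by
  induction k with
  | zero => simp
  | succ n ih =>
    rw [show 2 * (n + 1) = 2 * n + 1 + 1 by ring, sum_Icc_succ_top (by omega),
      sum_Icc_succ_top (by omega), ih, sum_Icc_succ_top (by omega), sum_Icc_succ_top (by omega)]
    rw [show 2 * (n + 1) - 1 = 2 * n + 1 by omega, show 2 * (n + 1) = 2 * n + 1 + 1 by ring]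
    abel

theorem harmonic_sub_half_harmonic_eq_sum_odd (k : ℕ) :
    (∑ l ∈ Icc 1 (2 * k), 1 / (l : ℝ)) - ∑ l ∈ Icc 1 k, 1 / (2 * (l : ℝ))
      = ∑ l ∈ Icc 1 k, 1 / (2 * (l : ℝ) - 1) := by
  simp only [sum_Icc_two_mul_eq_odd_add_even, Nat.cast_mul, Nat.cast_ofNat, add_sub_cancel_right]
  refine sum_congr rfl fun l hl => ?_
  rw [Nat.cast_sub (by grind), Nat.cast_mul, Nat.cast_ofNat, Nat.cast_one]

theorem two_mul_sum_partial_sums_odd_reciprocals (k : ℕ) :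
    2 * ∑ j ∈ Icc 1 k, ∑ l ∈ Icc 1 j, 1 / (2 * (l : ℝ) - 1)
      = (2 * (k : ℝ) + 1) * ∑ l ∈ Icc 1 k, 1 / (2 * (l : ℝ) - 1) - k := by
  rw [sum_Icc_sum_Icc_eq_sum_nsmul, mul_sum, mul_sum]
  -- `2 (k + 1 - l) = (2k + 1) - (2l - 1)`, and the last term cancels its reciprocal
  have hterm : ∀ l ∈ Icc 1 k, 2 * ((k + 1 - l) • (1 / (2 * (l : ℝ) - 1)))
      = (2 * k + 1) * (1 / (2 * (l : ℝ) - 1)) - 1 := by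
    intro l hl
    have hodd : 2 * (l : ℝ) - 1 ≠ 0 := by
      have : (1 : ℝ) ≤ l := by exact_mod_cast (mem_Icc.mp hl).1
      linarith
    rw [nsmul_eq_mul, Nat.cast_sub (by grind)]
    push_cast
    field_simp
    ring
  rw [sum_congr rfl hterm, sum_sub_distrib]
  simp

theorem double_sum_odd_reciprocals_general (k : ℕ) :
    2 * ∑ j ∈ Finset.Icc 1 k, ∑ l ∈ Finset.Icc 1 j, 1 / (2 * (l : ℝ) - 1)
      = (2 * (k : ℝ) + 1) *
          ((∑ l ∈ Finset.Icc 1 (2 * k), 1 / (l : ℝ)) - ∑ l ∈ Finset.Icc 1 k, 1 / (2 * (l : ℝ)))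
        - k := by
  rw [harmonic_sub_half_harmonic_eq_sum_odd, two_mul_sum_partial_sums_odd_reciprocals]

theorem double_sum_odd_reciprocals (k : ℕ) (hk : 0 < k) :
    2 * ∑ j ∈ Finset.Icc 1 k, ∑ l ∈ Finset.Icc 1 j, 1 / (2 * (l : ℝ) - 1)
      = (2 * (k : ℝ) + 1) *
          ((∑ l ∈ Finset.Icc 1 (2 * k), 1 / (l : ℝ)) - ∑ l ∈ Finset.Icc 1 k, 1 / (2 * (l : ℝ)))
        - k :=
  double_sum_odd_reciprocals_general k
end

section
/- For every integer j ≥ 2 and positive integer k, ∑_{i=1}^{k} ψ^{(j-1)}(1/2 + i) = (−1)^j·(j−1)!·2^{j−1}·∑_{m=0}^{k} 1/(2m+1)^{j−1} − (1/2)·ψ^{(j-1)}(1/2) + (−1)^j·(j−1)!·2^{j−1}·(2k+1)·∑_{m=k+1}^{∞} 1/(2m+1)^{j}. -/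
/-!
For `x > 0`, differentiating the Bohr–Mollerup limit
`log Γ(x) = lim (x log n + log n! - ∑_{m ≤ n} log (x + m))` term by term gives
`ψ(x) = -γ + ∑_m (1/(1+m) - 1/(x+m))`, and further termwise differentiation gives
`ψ^{(s-1)}(x) = (-1)^s (s-1)! ∑_n 1/(x+n)^s` for `s ≥ 2`. At `x = 1/2 + i` this is
`(-1)^s (s-1)! 2^s T_i` with `T_i = ∑_{m ≥ i} 1/(2m+1)^s`, and the identity follows by summing
the tails by parts: `∑_{i=1}^k T_i = ∑_{m ≤ k} m/(2m+1)^s + k T_{k+1}`.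
-/

/-- The digamma function `ψ(x) = Γ'(x)/Γ(x)`. -/
noncomputable def digamma (x : ℝ) : ℝ := deriv (fun y => Real.log (Real.Gamma y)) x

/-- The `j`-th polygamma function, the `j`-th derivative of the digamma function. -/
noncomputable def polygamma (j : ℕ) (x : ℝ) : ℝ := iteratedDeriv j digamma x

open Filter Topology Set Real
open scoped Nat

/-- The Hurwitz zeta function `ζ(s, x)` at a natural `s`; for `s ≤ 1` the series diverges and
this is the junk value `0`. -/
noncomputable def hurwitzZetaNat (s : ℕ) (x : ℝ) : ℝ := ∑' n : ℕ, 1 / (x + n) ^ s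

lemma summable_one_div_add_pow {x : ℝ} (hx : 0 < x) {s : ℕ} (hs : 1 < s) :
    Summable fun n : ℕ => 1 / (x + n) ^ s := by
  refine ((summable_one_div_nat_add_rpow x s).mpr (by exact_mod_cast hs)).congr fun n => ?_
  rw [abs_of_pos (by positivity), rpow_natCast, add_comm]

lemma hasDerivAt_one_div_add_pow (s n : ℕ) {y : ℝ} (hy : y + n ≠ 0) :
    HasDerivAt (fun z : ℝ => 1 / (z + n) ^ s) (-s / (y + n) ^ (s + 1)) y := by
  have h := (((hasDerivAt_id' y).add_const (n : ℝ)).fun_pow s).fun_inv (pow_ne_zero s hy)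
  have hval : -(s * (y + n) ^ (s - 1) * 1) / ((y + n) ^ s) ^ 2 = -s / (y + n) ^ (s + 1) := by
    rcases s with _ | s
    · simp
    · rw [Nat.add_sub_cancel]
      field_simp
      ring
  simpa only [one_div, hval] using h

lemma hasDerivAt_hurwitzZetaNat {s : ℕ} (hs : 1 < s) {x : ℝ} (hx : 0 < x) :
    HasDerivAt (hurwitzZetaNat s) (-s * hurwitzZetaNat (s + 1) x) x := by
  have hpos : ∀ y ∈ Ioi (x / 2), ∀ n : ℕ, 0 < y + n := fun y hy n => by
    have : 0 < y := (half_pos hx).trans hy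
    positivity
  have h := hasDerivAt_tsum_of_isPreconnected
    ((summable_one_div_add_pow (half_pos hx) (by omega : 1 < s + 1)).mul_left (s : ℝ))
    isOpen_Ioi isPreconnected_Ioi
    (fun n y hy => hasDerivAt_one_div_add_pow s n (hpos y hy n).ne')
    (fun n y hy => ?_) (half_lt_self hx) (summable_one_div_add_pow hx hs) (half_lt_self hx)
  · unfold hurwitzZetaNat
    rw [← tsum_mul_left]
    simpa only [mul_one_div] using h
  · have := hpos y hy n
    rw [norm_div, norm_neg, Real.norm_natCast, Real.norm_of_nonneg (by positivity), ← mul_one_div]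
    gcongr
    exact (mem_Ioi.1 hy).le

lemma abs_one_div_one_add_sub_one_div_add_le {a b y : ℝ} (ha : 0 < a) (ha1 : a ≤ 1)
    (hy : y ∈ Ioo a b) (m : ℕ) :
    |1 / (1 + m) - 1 / (y + m)| ≤ (b + 1) / a * (1 / (1 + m) ^ 2) := by
  obtain ⟨hay, hyb⟩ := hy
  have hy0 : 0 < y := ha.trans hay
  have hlow : a * (1 + m) ≤ y + m := by nlinarith [(Nat.cast_nonneg m : (0 : ℝ) ≤ m)]
  have hdiff : 1 / (1 + m) - 1 / (y + m) = (y - 1) / ((1 + m) * (y + m)) := by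
    field_simp
    ring
  rw [hdiff, abs_div, abs_of_pos (a := (1 + (m : ℝ)) * (y + m)) (by positivity)]
  calc |y - 1| / ((1 + m) * (y + m)) ≤ (b + 1) / ((1 + m) * (a * (1 + m))) := by
        gcongr
        · linarith
        · exact abs_le.2 ⟨by linarith, by linarith⟩
    _ = (b + 1) / a * (1 / (1 + m) ^ 2) := by
        field_simp

lemma tendsto_log_sub_sum_range_succ :
    Tendsto (fun n : ℕ => log n - ∑ m ∈ Finset.range (n + 1), 1 / (1 + (m : ℝ)))
      atTop (𝓝 (-eulerMascheroniConstant)) := by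
  have h := (tendsto_harmonic_sub_log.neg).sub tendsto_one_div_add_atTop_nhds_zero_nat
  rw [sub_zero] at h
  refine h.congr fun n => ?_
  simp only [harmonic, Rat.cast_sum, Finset.sum_range_succ]
  push_cast
  simp only [add_comm (1 : ℝ), one_div]
  ring

lemma hasDerivAt_logGammaSeq (n : ℕ) {y : ℝ} (hy : 0 < y) :
    HasDerivAt (fun z => BohrMollerup.logGammaSeq z n)
      (log n - ∑ m ∈ Finset.range (n + 1), 1 / (y + m)) y := by
  have hlin : HasDerivAt (fun z : ℝ => z * log n + log n !) (log n) y := by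
    simpa using ((hasDerivAt_id y).mul_const (log n)).add_const (log n !)
  have hlogs : HasDerivAt (fun z : ℝ => ∑ m ∈ Finset.range (n + 1), log (z + m))
      (∑ m ∈ Finset.range (n + 1), 1 / (y + m)) y :=
    HasDerivAt.fun_sum fun m _ => by
      simpa [one_div] using ((hasDerivAt_id y).add_const (m : ℝ)).log (by positivity)
  exact hlin.fun_sub hlogs

lemma hasDerivAt_log_Gamma {x : ℝ} (hx : 0 < x) :
    HasDerivAt (fun y => log (Gamma y))
      (-eulerMascheroniConstant + ∑' m : ℕ, (1 / (1 + (m : ℝ)) - 1 / (x + m))) x := by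
  obtain ⟨a, ha, ha1, hax⟩ : ∃ a, 0 < a ∧ a ≤ 1 ∧ a < x :=
    ⟨min x 1 / 2, by positivity, by linarith [min_le_right x 1], by linarith [min_le_left x 1]⟩
  have hxs : x ∈ Ioo a (x + 1) := ⟨hax, by linarith⟩
  have hpos : ∀ y ∈ Ioo a (x + 1), 0 < y := fun y hy => ha.trans hy.1
  have hsum := tendstoUniformlyOn_tsum_nat
    ((summable_one_div_add_pow one_pos one_lt_two).mul_left ((x + 1 + 1) / a))
    fun m y hy => (norm_eq_abs _).trans_le (abs_one_div_one_add_sub_one_div_add_le ha ha1 hy m)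
  refine hasDerivAt_of_tendstoUniformlyOn
    (g' := fun y => -eulerMascheroniConstant + ∑' m : ℕ, (1 / (1 + (m : ℝ)) - 1 / (y + m)))
    isOpen_Ioo ?_
    (Eventually.of_forall fun n y hy => hasDerivAt_logGammaSeq n (hpos y hy))
    (fun y hy => BohrMollerup.tendsto_log_gamma (hpos y hy)) hxs
  refine ((tendsto_log_sub_sum_range_succ.tendstoUniformlyOn_const _).add
    fun u hu => (tendsto_add_atTop_nat 1).eventually (hsum u hu)).congr ?_
  filter_upwards with n y _
  simp only [Pi.add_apply, Finset.sum_sub_distrib]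
  ring

lemma digamma_eq_tsum {x : ℝ} (hx : 0 < x) :
    digamma x = -eulerMascheroniConstant + ∑' m : ℕ, (1 / (1 + (m : ℝ)) - 1 / (x + m)) :=
  (hasDerivAt_log_Gamma hx).deriv

lemma hasDerivAt_tsum_one_div_one_add_sub_one_div_add {x : ℝ} (hx : 0 < x) :
    HasDerivAt (fun y => ∑' m : ℕ, (1 / (1 + (m : ℝ)) - 1 / (y + m)))
      (hurwitzZetaNat 2 x) x := by
  obtain ⟨a, ha, ha1, hax⟩ : ∃ a, 0 < a ∧ a < 1 ∧ a < x :=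
    ⟨min x 1 / 2, by positivity, by linarith [min_le_right x 1], by linarith [min_le_left x 1]⟩
  have hpos : ∀ y ∈ Ioi a, ∀ n : ℕ, 0 < y + n := fun y hy n => by
    have : 0 < y := ha.trans hy
    positivity
  refine hasDerivAt_tsum_of_isPreconnected
    (g := fun (n : ℕ) (y : ℝ) => 1 / (1 + (n : ℝ)) - 1 / (y + n))
    (g' := fun (n : ℕ) (y : ℝ) => 1 / (y + n) ^ 2) (summable_one_div_add_pow ha one_lt_two)
    isOpen_Ioi isPreconnected_Ioi (fun n y hy => ?_) (fun n y hy => ?_) (y₀ := 1) ha1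
    (by simp [add_comm]) hax
  · simpa [neg_div] using
      (hasDerivAt_one_div_add_pow 1 n (hpos y hy n).ne').const_sub (1 / (1 + n : ℝ))
  · have := hpos y hy n
    rw [Real.norm_of_nonneg (by positivity)]
    gcongr
    exact (mem_Ioi.1 hy).le

lemma deriv_digamma {x : ℝ} (hx : 0 < x) : deriv digamma x = hurwitzZetaNat 2 x :=
  (((hasDerivAt_tsum_one_div_one_add_sub_one_div_add hx).const_add _).congr_of_eventuallyEq
    (eventually_gt_nhds hx |>.mono fun _ hy => digamma_eq_tsum hy)).deriv

lemma polygamma_eq_hurwitzZetaNat {m : ℕ} (hm : 1 ≤ m) {x : ℝ} (hx : 0 < x) :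
    polygamma m x = (-1) ^ (m + 1) * m ! * hurwitzZetaNat (m + 1) x := by
  suffices EqOn (iteratedDeriv m digamma)
      (fun y => (-1) ^ (m + 1) * m ! * hurwitzZetaNat (m + 1) y) (Ioi 0) from this hx
  induction m, hm using Nat.le_induction with
  | base => intro y hy; simp [iteratedDeriv_one, deriv_digamma hy]
  | succ m hm ih =>
    intro y hy
    rw [iteratedDeriv_succ, (ih.eventuallyEq_of_mem (Ioi_mem_nhds hy)).deriv_eq,
      ((hasDerivAt_hurwitzZetaNat (by omega) hy).const_mul _).deriv, Nat.factorial_succ]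
    push_cast
    ring

lemma hurwitzZetaNat_half_add (s : ℕ) (x : ℝ) :
    hurwitzZetaNat s (1 / 2 + x) = 2 ^ s * ∑' n : ℕ, 1 / (2 * (n + x) + 1) ^ s := by
  rw [hurwitzZetaNat, ← tsum_mul_left]
  congr 1 with n
  rw [show 2 * (n + x) + 1 = 2 * (1 / 2 + x + n) by ring, mul_pow, ← one_div_mul_one_div,
    ← mul_assoc, mul_one_div_cancel (by positivity), one_mul]

lemma sum_Icc_tsum_nat_add {G : Type*} [AddCommGroup G] [TopologicalSpace G]
    [IsTopologicalAddGroup G] [T2Space G] {f : ℕ → G} (hf : Summable f) (k : ℕ) :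
    ∑ i ∈ Finset.Icc 1 k, ∑' n, f (n + i)
      = ∑ m ∈ Finset.range (k + 1), m • f m + k • ∑' n, f (n + (k + 1)) := by
  induction k with
  | zero => simp
  | succ k ih =>
    have hstep : ∑' n, f (n + (k + 1)) = f (k + 1) + ∑' n, f (n + (k + 1 + 1)) := by
      rw [((summable_nat_add_iff (k + 1)).2 hf).tsum_eq_zero_add, zero_add]
      simp only [add_right_comm _ 1 (k + 1)]
      rfl
    rw [Finset.sum_Icc_succ_top (by omega), ih, Finset.sum_range_succ _ (k + 1), hstep, succ_nsmul]
    simp only [smul_add, add_smul, one_smul]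
    abel

lemma summable_one_div_two_mul_add_one_pow {s : ℕ} (hs : 1 < s) :
    Summable fun m : ℕ => 1 / (2 * (m : ℝ) + 1) ^ s :=
  (summable_one_div_add_pow one_half_pos hs).of_nonneg_of_le (fun m => by positivity) fun m => by
    gcongr 1 / ?_ ^ _
    linarith [(Nat.cast_nonneg m : (0 : ℝ) ≤ m)]

lemma polygamma_half_add_natCast {s : ℕ} (hs : 1 ≤ s) (i : ℕ) :
    polygamma s (1 / 2 + i)
      = (-1) ^ (s + 1) * s ! * 2 ^ (s + 1) *
          ∑' n : ℕ, 1 / (2 * ((n + i : ℕ) : ℝ) + 1) ^ (s + 1) := by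
  rw [polygamma_eq_hurwitzZetaNat hs (by positivity), hurwitzZetaNat_half_add]
  simp only [Nat.cast_add, mul_assoc]

theorem sum_polygamma_half_add_general (j : ℕ) (hj : 2 ≤ j) (k : ℕ) :
    ∑ i ∈ Finset.Icc 1 k, polygamma (j - 1) (1/2 + i)
      = (-1) ^ j * (Nat.factorial (j - 1) : ℝ) * 2 ^ (j - 1) *
          (∑ m ∈ Finset.range (k + 1), 1 / (2 * (m : ℝ) + 1) ^ (j - 1))
        - (1/2) * polygamma (j - 1) (1/2)
        + (-1) ^ j * (Nat.factorial (j - 1) : ℝ) * 2 ^ (j - 1) * (2 * (k : ℝ) + 1) *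
          ∑' m : ℕ, 1 / (2 * ((m : ℝ) + k + 1) + 1) ^ j := by
  obtain ⟨s, rfl⟩ : ∃ s, j = s + 1 := ⟨j - 1, by omega⟩
  set f : ℕ → ℝ := fun m => 1 / (2 * (m : ℝ) + 1) ^ (s + 1)
  have hf : Summable f := summable_one_div_two_mul_add_one_pow (by omega)
  have hpoly (i : ℕ) : polygamma s (1 / 2 + i)
      = (-1) ^ (s + 1) * s ! * 2 ^ (s + 1) * ∑' n, f (n + i) :=
    polygamma_half_add_natCast (by omega) i
  have hpoly_half : polygamma s (1 / 2) = (-1) ^ (s + 1) * s ! * 2 ^ (s + 1) * ∑' n, f n := by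
    simpa using hpoly 0
  have hhead : ∑' n, f n = ∑ m ∈ Finset.range (k + 1), f m + ∑' n, f (n + (k + 1)) :=
    (hf.sum_add_tsum_nat_add _).symm
  have htail :
      ∑' m : ℕ, 1 / (2 * ((m : ℝ) + k + 1) + 1) ^ (s + 1) = ∑' n, f (n + (k + 1)) := by
    simp only [f, Nat.cast_add, Nat.cast_one, add_assoc]
  have hlower : ∑ m ∈ Finset.range (k + 1), 1 / (2 * (m : ℝ) + 1) ^ s
      = 2 * ∑ m ∈ Finset.range (k + 1), m • f m + ∑ m ∈ Finset.range (k + 1), f m := by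
    rw [Finset.mul_sum, ← Finset.sum_add_distrib]
    refine Finset.sum_congr rfl fun m _ => ?_
    simp only [f, nsmul_eq_mul]
    field_simp
    ring
  rw [Nat.add_sub_cancel, Finset.sum_congr rfl fun i _ => hpoly i, ← Finset.mul_sum,
    sum_Icc_tsum_nat_add hf, hlower, hpoly_half, hhead, htail, nsmul_eq_mul]
  ring

theorem sum_polygamma_half_add (j : ℕ) (hj : 2 ≤ j) (k : ℕ) (hk : 0 < k) :
    ∑ i ∈ Finset.Icc 1 k, polygamma (j - 1) (1/2 + i)
      = (-1) ^ j * (Nat.factorial (j - 1) : ℝ) * 2 ^ (j - 1) *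
          (∑ m ∈ Finset.range (k + 1), 1 / (2 * (m : ℝ) + 1) ^ (j - 1))
        - (1/2) * polygamma (j - 1) (1/2)
        + (-1) ^ j * (Nat.factorial (j - 1) : ℝ) * 2 ^ (j - 1) * (2 * (k : ℝ) + 1) *
          ∑' m : ℕ, 1 / (2 * ((m : ℝ) + k + 1) + 1) ^ j :=
  sum_polygamma_half_add_general j hj k
end
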